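/- arXiv:1401.7786 — 7 statements merged into one kernel-verified Lean document; each statement's English description precedes it below -/
import Mathlib

section
/- Let k and r be real numbers with 1 < r < k, set δ := k² + r − √((k²−1)(k²−r²)) and t := (r−1)(r+1+δ)/((r+3)δ − (r+1)(3r+1)), let l₁ := 2·log k, and let l₂ ≥ 0 be the real number with cosh(l₂/2) = (k − r/k)/(r−1). Then (t−1)/(t+1) = (2r(r+1) − 2δ)/(δ(r+1) − (r+1)²) and (t−1)/(t+1) = sinh(l₂/2) / (cosh(l₁/2) + cosh(l₂/2)). -/
/-!
Write `s = √((k²-1)(k²-r²))`, so `δ = k² + r - s`. Since `t` is a quotient `N / D`, the ratio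
`(t-1)/(t+1)` is `(N - D)/(N + D)`, and both `N - D` and `N + D` are, up to the factor 2, the
numerator and denominator of the first formula. For the second one, the hypothesis on `l₂` gives
`sinh (l₂/2) = s / (k(r-1))` and `cosh (l₁/2) + cosh (l₂/2) = (r+1)(k²-1) / (2k(r-1))`, so the right
side is `2s / ((r+1)(k²-1))`; equating it with the first formula is the relation
`s² = (k²-1)(k²-r²)`.
-/

open Real

theorem div_sub_one_div_div_add_one {K : Type*} [Field K] {N D : K} (hD : D ≠ 0) :
    (N / D - 1) / (N / D + 1) = (N - D) / (N + D) := by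
  rw [div_sub_one hD, div_add_one hD, div_div_div_cancel_right₀ hD]

theorem Real.sinh_eq_sqrt_cosh_sq_sub_one {x : ℝ} (hx : 0 ≤ x) : sinh x = √(cosh x ^ 2 - 1) := by
  rw [← sinh_sq, sqrt_sq (sinh_nonneg_iff.mpr hx)]

theorem collar_t_ratio_eq (r δ : ℝ) (hD : (r + 3) * δ - (r + 1) * (3 * r + 1) ≠ 0) :
    ((r - 1) * (r + 1 + δ) / ((r + 3) * δ - (r + 1) * (3 * r + 1)) - 1) /
        ((r - 1) * (r + 1 + δ) / ((r + 3) * δ - (r + 1) * (3 * r + 1)) + 1) =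
      (2 * r * (r + 1) - 2 * δ) / (δ * (r + 1) - (r + 1) ^ 2) := by
  rw [div_sub_one_div_div_add_one hD,
    show (r - 1) * (r + 1 + δ) - ((r + 3) * δ - (r + 1) * (3 * r + 1)) =
      2 * (2 * r * (r + 1) - 2 * δ) by ring,
    show (r - 1) * (r + 1 + δ) + ((r + 3) * δ - (r + 1) * (3 * r + 1)) =
      2 * (δ * (r + 1) - (r + 1) ^ 2) by ring,
    mul_div_mul_left _ _ two_ne_zero]

section

variable {k r s : ℝ}

theorem collar_t_denominator_pos (hr : 1 < r) (hk : r < k)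
    (hs : s ^ 2 = (k ^ 2 - 1) * (k ^ 2 - r ^ 2)) :
    0 < (r + 3) * (k ^ 2 + r - s) - (r + 1) * (3 * r + 1) := by
  set M := (r + 3) * k ^ 2 - (2 * r ^ 2 + r + 1)
  have hM : 0 < M := by nlinarith
  have hgap : M ^ 2 - ((r + 3) * s) ^ 2 = (r - 1) ^ 2 * (r + 1) * ((r + 3) * k ^ 2 + 3 * r + 1) := by
    rw [mul_pow, hs]; ring
  have hlt : ((r + 3) * s) ^ 2 < M ^ 2 := by
    have : 0 < (r - 1) ^ 2 * (r + 1) * ((r + 3) * k ^ 2 + 3 * r + 1) := by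
      have : 0 < r - 1 := by linarith
      positivity
    linarith
  have := lt_of_pow_lt_pow_left₀ 2 hM.le hlt
  linarith

theorem sinh_half_eq (hr : 1 < r) (hk : r < k) (hs0 : 0 ≤ s)
    (hs : s ^ 2 = (k ^ 2 - 1) * (k ^ 2 - r ^ 2)) {l : ℝ} (hl : 0 ≤ l)
    (hcosh : cosh (l / 2) = (k - r / k) / (r - 1)) :
    sinh (l / 2) = s / (k * (r - 1)) := by
  have hk0 : 0 < k := by linarith
  have hr1 : 0 < r - 1 := by linarith
  -- `(k² - r)² - k²(r - 1)² = (k² - 1)(k² - r²)`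
  have hsq : cosh (l / 2) ^ 2 - 1 = (s / (k * (r - 1))) ^ 2 := by
    rw [hcosh, div_pow s, hs]
    field_simp
    ring
  rw [sinh_eq_sqrt_cosh_sq_sub_one (by linarith), hsq, sqrt_sq (by positivity)]

theorem cosh_log_add_eq (hr : 1 < r) (hk : 0 < k) :
    cosh (log k) + (k - r / k) / (r - 1) = (r + 1) * (k ^ 2 - 1) / (2 * k * (r - 1)) := by
  have : r - 1 ≠ 0 := (sub_pos.mpr hr).ne'
  rw [cosh_log hk]
  field_simp
  ring

theorem collar_delta_ratio_eq (hr : 1 < r) (hk : r < k)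
    (hs : s ^ 2 = (k ^ 2 - 1) * (k ^ 2 - r ^ 2)) :
    (2 * r * (r + 1) - 2 * (k ^ 2 + r - s)) / ((k ^ 2 + r - s) * (r + 1) - (r + 1) ^ 2) =
      2 * s / ((r + 1) * (k ^ 2 - 1)) := by
  have hk1 : 0 < k ^ 2 - 1 := by nlinarith
  have hs_lt : s < k ^ 2 - 1 := by
    refine lt_of_pow_lt_pow_left₀ 2 hk1.le ?_
    rw [hs]
    nlinarith [mul_pos hk1 (show 0 < r ^ 2 - 1 by nlinarith)]
  rw [div_eq_div_iff (by nlinarith) (by positivity)]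
  linear_combination 2 * (r + 1) * hs

end

/-- Theorems 1.1 and 3.1, algebraic content for θ₂:
with `δ = k² + r - √((k²-1)(k²-r²))`, `t = (r-1)(r+1+δ)/((r+3)δ - (r+1)(3r+1))`,
`l₁ = 2 log k` and `cosh (l₂/2) = (k - r/k)/(r-1)`, one has
`(t-1)/(t+1) = (2r(r+1) - 2δ)/(δ(r+1) - (r+1)²)` and
`(t-1)/(t+1) = sinh(l₂/2) / (cosh(l₁/2) + cosh(l₂/2))`. -/
theorem stmt1 (k r l₂ : ℝ) (hr : 1 < r) (hk : r < k) (hl₂ : 0 ≤ l₂)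
    (hcosh : Real.cosh (l₂ / 2) = (k - r / k) / (r - 1)) :
    let δ := k ^ 2 + r - Real.sqrt ((k ^ 2 - 1) * (k ^ 2 - r ^ 2))
    let t := (r - 1) * (r + 1 + δ) / ((r + 3) * δ - (r + 1) * (3 * r + 1))
    (t - 1) / (t + 1) = (2 * r * (r + 1) - 2 * δ) / (δ * (r + 1) - (r + 1) ^ 2) ∧
    (t - 1) / (t + 1) =
      Real.sinh (l₂ / 2) /
        (Real.cosh ((2 * Real.log k) / 2) + Real.cosh (l₂ / 2)) := by
  intro δ t
  have hk0 : 0 < k := by linarith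
  set s := √((k ^ 2 - 1) * (k ^ 2 - r ^ 2))
  have hs0 : 0 ≤ s := sqrt_nonneg _
  have hs : s ^ 2 = (k ^ 2 - 1) * (k ^ 2 - r ^ 2) := sq_sqrt (mul_nonneg (by nlinarith) (by nlinarith))
  have hratio : (t - 1) / (t + 1) = (2 * r * (r + 1) - 2 * δ) / (δ * (r + 1) - (r + 1) ^ 2) :=
    collar_t_ratio_eq r δ (collar_t_denominator_pos hr hk hs).ne'
  refine ⟨hratio, ?_⟩
  have hr1 : r - 1 ≠ 0 := (sub_pos.mpr hr).ne'
  rw [hratio, collar_delta_ratio_eq hr hk hs, sinh_half_eq hr hk hs0 hs hl₂ hcosh,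
    mul_div_cancel_left₀ (log k) two_ne_zero, hcosh, cosh_log_add_eq hr hk0]
  field_simp
end

section
/- Let k and r be real numbers with 1 < r < k and set δ := k² + r − √((k²−1)(k²−r²)). Then 2r < (1/2)(r+1)² < δ < r(r+1). -/
/-- Bounds on `δ = k² + r - √((k²-1)(k²-r²))` from the proof of Theorem 3.1:
`2r < (1/2)(r+1)² < δ < r(r+1)`. -/
theorem stmt2 (k r : ℝ) (hr : 1 < r) (hk : r < k) :
    2 * r < (1 / 2) * (r + 1) ^ 2 ∧
    (1 / 2) * (r + 1) ^ 2 < k ^ 2 + r - Real.sqrt ((k ^ 2 - 1) * (k ^ 2 - r ^ 2)) ∧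
    k ^ 2 + r - Real.sqrt ((k ^ 2 - 1) * (k ^ 2 - r ^ 2)) < r * (r + 1) := by
  have hk1 : (1:ℝ) < k := hr.trans hk
  have hA : k ^ 2 - 1 > 0 := by nlinarith
  have hB : k ^ 2 - r ^ 2 > 0 := by nlinarith
  have hAB : (k ^ 2 - 1) * (k ^ 2 - r ^ 2) > 0 := mul_pos hA hB
  set s := Real.sqrt ((k ^ 2 - 1) * (k ^ 2 - r ^ 2)) with hs
  have hs0 : 0 ≤ s := Real.sqrt_nonneg _
  have hs2 : s ^ 2 = (k ^ 2 - 1) * (k ^ 2 - r ^ 2) := Real.sq_sqrt hAB.le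
  have hc : (0:ℝ) < k ^ 2 - (r ^ 2 + 1) / 2 := by nlinarith
  have key1 : s < k ^ 2 - (r ^ 2 + 1) / 2 := by
    have h1 : s ^ 2 < (k ^ 2 - (r ^ 2 + 1) / 2) ^ 2 := by
      rw [hs2]; nlinarith [pow_pos (show (0:ℝ) < r ^ 2 - 1 by nlinarith) 2]
    nlinarith [hs0, hc]
  have key2 : k ^ 2 - r ^ 2 < s := by
    have h1 : (k ^ 2 - r ^ 2) ^ 2 < s ^ 2 := by
      rw [hs2]; nlinarith [mul_pos hB (show (0:ℝ) < r ^ 2 - 1 by nlinarith)]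
    nlinarith [hs0, hB]
  refine ⟨by nlinarith [sq_nonneg (r - 1)], by linarith, by linarith⟩
end

section
/- Let k and r be real numbers with 1 < r < k, set δ := k² + r − √((k²−1)(k²−r²)) and t := (r−1)(r+1+δ)/((r+3)δ − (r+1)(3r+1)). Then (r+3)δ − (r+1)(3r+1) > 0 and t > 1. -/
/-- From the proof of Theorem 3.1: with `δ = k² + r - √((k²-1)(k²-r²))` and
`t = (r-1)(r+1+δ)/((r+3)δ - (r+1)(3r+1))`, the denominator
`(r+3)δ - (r+1)(3r+1)` is positive and `t > 1`. -/
theorem stmt3 (k r : ℝ) (hr : 1 < r) (hk : r < k) :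
    let δ := k ^ 2 + r - Real.sqrt ((k ^ 2 - 1) * (k ^ 2 - r ^ 2))
    let t := (r - 1) * (r + 1 + δ) / ((r + 3) * δ - (r + 1) * (3 * r + 1))
    (r + 3) * δ - (r + 1) * (3 * r + 1) > 0 ∧ t > 1 := by
  intro δ t
  set s := Real.sqrt ((k ^ 2 - 1) * (k ^ 2 - r ^ 2)) with hs
  have hk1 : (1:ℝ) < k := lt_trans hr hk
  have h1 : (0:ℝ) < k ^ 2 - 1 := by nlinarith
  have h2 : (0:ℝ) < k ^ 2 - r ^ 2 := by nlinarith
  have hsnn : 0 ≤ s := Real.sqrt_nonneg _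
  have hsq : s ^ 2 = (k ^ 2 - 1) * (k ^ 2 - r ^ 2) := by
    rw [hs, Real.sq_sqrt (le_of_lt (mul_pos h1 h2))]
  -- s < k² − (1+r²)/2
  have hub : s < k ^ 2 - (1 + r ^ 2) / 2 := by
    have hc : (0:ℝ) ≤ k ^ 2 - (1 + r ^ 2) / 2 := by nlinarith
    have hlt : s ^ 2 < (k ^ 2 - (1 + r ^ 2) / 2) ^ 2 := by
      rw [hsq]; nlinarith [mul_pos (show (0:ℝ) < r ^ 2 - 1 by nlinarith)
        (show (0:ℝ) < r ^ 2 - 1 by nlinarith)]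
    exact lt_of_pow_lt_pow_left₀ 2 hc hlt
  -- s > k² − r²
  have hlb : k ^ 2 - r ^ 2 < s := by
    have hlt : (k ^ 2 - r ^ 2) ^ 2 < s ^ 2 := by
      rw [hsq]; nlinarith [mul_pos h2 (show (0:ℝ) < r ^ 2 - 1 by nlinarith)]
    exact lt_of_pow_lt_pow_left₀ 2 hsnn hlt
  have hden : (r + 3) * δ - (r + 1) * (3 * r + 1) > 0 := by
    show (r + 3) * (k ^ 2 + r - s) - (r + 1) * (3 * r + 1) > 0
    nlinarith [sq_nonneg (r - 1), mul_pos (by linarith : (0:ℝ) < r + 3)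
      (by nlinarith : (0:ℝ) < k ^ 2 + r - s - (r + 1) ^ 2 / 2)]
  refine ⟨hden, ?_⟩
  rw [gt_iff_lt, show t = (r - 1) * (r + 1 + δ) / ((r + 3) * δ - (r + 1) * (3 * r + 1)) from rfl,
    lt_div_iff₀ hden]
  show 1 * ((r + 3) * (k ^ 2 + r - s) - (r + 1) * (3 * r + 1)) <
    (r - 1) * (r + 1 + (k ^ 2 + r - s))
  nlinarith [hlb]
end

section
/- Let k and r be real numbers with 1 < r < k, set δ := k² + r − √((k²−1)(k²−r²)), x₁ := δ/(r+1) and x₂ := k²/x₁. Then the Möbius transformation φ(x) = (2kx − k(r+1)) / (((r+1)/k)x − 2r/k) satisfies φ(x₁) = x₁ and φ(x₂) = x₂, and moreover (r+1)/2 < x₁ < r < k < x₂. -/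
/-!
The fixed points of `φ` are the roots of the quadratic
`(r+1)x² - 2(k²+r)x + k²(r+1)`, whose roots are `(k² + r ± s)/(r+1)` with
`s = √((k²-1)(k²-r²))`; their product is `k²`, so `x₂ = k²/x₁` is the other root.
The inequalities follow from `k² - r² < s < ((k²-1) + (k²-r²))/2`, i.e. from comparing the
geometric mean `s` of `k²-1 > k²-r²` with the smaller factor and with the arithmetic mean.
-/

open Real

lemma lt_sqrt_mul_of_lt {a b : ℝ} (hb : 0 < b) (hba : b < a) : b < √(a * b) :=
  (lt_sqrt hb.le).2 (by nlinarith)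

lemma two_mul_sqrt_mul_lt_add {a b : ℝ} (ha : 0 ≤ a) (hb : 0 ≤ b) (hab : a ≠ b) :
    2 * √(a * b) < a + b := by
  have hne : √a - √b ≠ 0 := sub_ne_zero.2 fun h => hab (by
    rw [← sq_sqrt ha, ← sq_sqrt hb, h])
  rw [sqrt_mul ha]
  nlinarith [sq_pos_of_ne_zero hne, sq_sqrt ha, sq_sqrt hb]

/-- The Möbius transformation `φ` of the statement. -/
noncomputable def mobius (k r x : ℝ) : ℝ :=
  (2 * k * x - k * (r + 1)) / (((r + 1) / k) * x - 2 * r / k)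

/-- `φ x = x` amounts to the vanishing of this quadratic, once denominators are cleared. -/
def fixedPoly (k r x : ℝ) : ℝ :=
  (r + 1) * x ^ 2 - 2 * (k ^ 2 + r) * x + k ^ 2 * (r + 1)

section FixedPoints

variable {k r : ℝ}

lemma mobius_eq_self_of_fixedPoly_eq_zero (hk : k ≠ 0) {x : ℝ} (hq : fixedPoly k r x = 0)
    (hd : (r + 1) * x - 2 * r ≠ 0) : mobius k r x = x := by
  have hd' : ((r + 1) / k) * x - 2 * r / k ≠ 0 := by
    rwa [div_mul_eq_mul_div, ← sub_div, div_ne_zero_iff, and_iff_left hk]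
  rw [mobius, div_eq_iff hd']
  field_simp
  unfold fixedPoly at hq
  linear_combination -hq

lemma fixedPoly_div_eq_zero {x : ℝ} (hx : x ≠ 0) (hq : fixedPoly k r x = 0) :
    fixedPoly k r (k ^ 2 / x) = 0 := by
  unfold fixedPoly at *
  field_simp
  linear_combination k ^ 2 * hq

lemma fixedPoly_eq_zero_of_sq_eq {s : ℝ} (hr : r + 1 ≠ 0)
    (hs : s ^ 2 = (k ^ 2 - 1) * (k ^ 2 - r ^ 2)) :
    fixedPoly k r ((k ^ 2 + r - s) / (r + 1)) = 0 := by
  unfold fixedPoly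
  field_simp
  linear_combination hs

end FixedPoints

/-- Proof of Theorem 3.1: the Möbius transformation of `fg⁻¹`,
`φ(x) = (2kx - k(r+1)) / (((r+1)/k)x - 2r/k)`, fixes the two points
`x₁ = δ/(r+1)` and `x₂ = k²/x₁`, and `(r+1)/2 < x₁ < r < k < x₂`. -/
theorem stmt5 (k r : ℝ) (hr : 1 < r) (hk : r < k) :
    let δ := k ^ 2 + r - Real.sqrt ((k ^ 2 - 1) * (k ^ 2 - r ^ 2))
    let x₁ := δ / (r + 1)
    let x₂ := k ^ 2 / x₁
    let φ : ℝ → ℝ := fun x => (2 * k * x - k * (r + 1)) / (((r + 1) / k) * x - 2 * r / k)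
    φ x₁ = x₁ ∧ φ x₂ = x₂ ∧ (r + 1) / 2 < x₁ ∧ x₁ < r ∧ r < k ∧ k < x₂ := by
  intro δ x₁ x₂ φ
  have hr₁ : 0 < r + 1 := by linarith
  have hk₀ : 0 < k := by linarith
  have hkr : 0 < k ^ 2 - r ^ 2 := by nlinarith
  have hk₁r : k ^ 2 - r ^ 2 < k ^ 2 - 1 := by nlinarith
  have hs_lo := lt_sqrt_mul_of_lt hkr hk₁r
  have hs_hi := two_mul_sqrt_mul_lt_add (hkr.trans hk₁r).le hkr.le hk₁r.ne'
  have hx₁_lo : (r + 1) / 2 < x₁ := by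
    rw [lt_div_iff₀ hr₁]; nlinarith
  have hx₁_hi : x₁ < r := by
    rw [div_lt_iff₀ hr₁]; nlinarith
  have hx₁_pos : 0 < x₁ := by linarith
  have hx₂ : k < x₂ := by
    rw [lt_div_iff₀ hx₁_pos]; nlinarith
  have hd₁ : 0 < (r + 1) * x₁ - 2 * r := by nlinarith
  have hd₂ : 0 < (r + 1) * x₂ - 2 * r := by nlinarith
  have hq₁ : fixedPoly k r x₁ = 0 :=
    fixedPoly_eq_zero_of_sq_eq hr₁.ne' (sq_sqrt (mul_pos (hkr.trans hk₁r) hkr).le)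
  exact ⟨mobius_eq_self_of_fixedPoly_eq_zero hk₀.ne' hq₁ hd₁.ne',
    mobius_eq_self_of_fixedPoly_eq_zero hk₀.ne' (fixedPoly_div_eq_zero hx₁_pos.ne' hq₁) hd₂.ne',
    hx₁_lo, hx₁_hi, hk, hx₂⟩
end

section
/- Let k and r be real numbers with 1 < r < k and set δ := k² + r − √((k²−1)(k²−r²)). Then −(r−1)² < 3r − 1 − δ < (1/2)(r−1)(3−r). -/
/-- Remark 2: with `δ = k² + r - √((k²-1)(k²-r²))`, one has
`-(r-1)² < 3r - 1 - δ < (1/2)(r-1)(3-r)`. -/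
theorem stmt8 (k r : ℝ) (hr : 1 < r) (hk : r < k) :
    -(r - 1) ^ 2 < 3 * r - 1 - (k ^ 2 + r - Real.sqrt ((k ^ 2 - 1) * (k ^ 2 - r ^ 2))) ∧
    3 * r - 1 - (k ^ 2 + r - Real.sqrt ((k ^ 2 - 1) * (k ^ 2 - r ^ 2))) <
      (1 / 2) * (r - 1) * (3 - r) := by
  have h1 : (1:ℝ) < k := hr.trans hk
  have hk2 : 0 < k ^ 2 - r ^ 2 := by nlinarith
  have hk1 : 0 < k ^ 2 - 1 := by nlinarith
  have hlow : k ^ 2 - r ^ 2 < Real.sqrt ((k ^ 2 - 1) * (k ^ 2 - r ^ 2)) := by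
    rw [Real.lt_sqrt hk2.le]
    nlinarith [mul_pos hk2 (show (0:ℝ) < r ^ 2 - 1 by nlinarith)]
  have hhigh : Real.sqrt ((k ^ 2 - 1) * (k ^ 2 - r ^ 2)) < k ^ 2 - (r ^ 2 + 1) / 2 := by
    rw [Real.sqrt_lt' (by nlinarith)]
    nlinarith [mul_pos (show (0:ℝ) < r ^ 2 - 1 by nlinarith) (show (0:ℝ) < r ^ 2 - 1 by nlinarith)]
  constructor <;> nlinarith [hlow, hhigh]
end

section
/- Let k and r be real numbers with 1 < r < k, set δ := k² + r − √((k²−1)(k²−r²)) and t := (r−1)(r+1+δ)/((r+3)δ − (r+1)(3r+1)). If 1 < r < 3, then: t > r if and only if k² > (3r−1)/(3−r); t = r if and only if k² = (3r−1)/(3−r); and t < r if and only if k² < (3r−1)/(3−r). If r ≥ 3, then t < r. -/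
set_option maxHeartbeats 1000000

private theorem stmt9_aux (k r s : ℝ) (hr : 1 < r) (hk : r < k) (hs0 : 0 ≤ s)
    (hs2 : s ^ 2 = (k ^ 2 - 1) * (k ^ 2 - r ^ 2)) :
    (r < 3 →
      ((r - 1) * (r + 1 + (k ^ 2 + r - s)) /
          ((r + 3) * (k ^ 2 + r - s) - (r + 1) * (3 * r + 1)) > r ↔
        k ^ 2 > (3 * r - 1) / (3 - r)) ∧
      ((r - 1) * (r + 1 + (k ^ 2 + r - s)) /
          ((r + 3) * (k ^ 2 + r - s) - (r + 1) * (3 * r + 1)) = r ↔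
        k ^ 2 = (3 * r - 1) / (3 - r)) ∧
      ((r - 1) * (r + 1 + (k ^ 2 + r - s)) /
          ((r + 3) * (k ^ 2 + r - s) - (r + 1) * (3 * r + 1)) < r ↔
        k ^ 2 < (3 * r - 1) / (3 - r))) ∧
    (3 ≤ r →
      (r - 1) * (r + 1 + (k ^ 2 + r - s)) /
          ((r + 3) * (k ^ 2 + r - s) - (r + 1) * (3 * r + 1)) < r) := by
  have hk1 : 1 < k := hr.trans hk
  have hr0 : (0:ℝ) < r := by linarith
  have hrk2 : r ^ 2 < k ^ 2 := by nlinarith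
  have h1k2 : 1 < k ^ 2 := by nlinarith
  -- lower bound for s, hence for δ := k^2 + r - s
  have hsA : s < k ^ 2 + r - (r + 1) ^ 2 / 2 := by
    nlinarith [sq_nonneg (r ^ 2 - 1), sq_nonneg (r - 1),
      sq_nonneg (s - (k ^ 2 + r - (r + 1) ^ 2 / 2))]
  -- denominator positive
  have hD : 0 < (r + 3) * (k ^ 2 + r - s) - (r + 1) * (3 * r + 1) := by
    nlinarith [mul_nonneg (by linarith : (0:ℝ) ≤ r + 1) (sq_nonneg (r - 1)),
      mul_pos (by linarith : (0:ℝ) < r + 3)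
        (by linarith : (0:ℝ) < (k ^ 2 + r - s) - (r + 1) ^ 2 / 2)]
  -- t vs r iff δ vs 3r-1
  have ht_gt : (r - 1) * (r + 1 + (k ^ 2 + r - s)) /
      ((r + 3) * (k ^ 2 + r - s) - (r + 1) * (3 * r + 1)) > r ↔
      k ^ 2 + r - s < 3 * r - 1 := by
    rw [gt_iff_lt, lt_div_iff₀ hD]
    constructor <;> intro h <;> nlinarith [sq_nonneg (r + 1)]
  have ht_eq : (r - 1) * (r + 1 + (k ^ 2 + r - s)) /
      ((r + 3) * (k ^ 2 + r - s) - (r + 1) * (3 * r + 1)) = r ↔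
      k ^ 2 + r - s = 3 * r - 1 := by
    rw [div_eq_iff (ne_of_gt hD)]
    constructor <;> intro h <;> nlinarith [sq_nonneg (r + 1)]
  have ht_lt : (r - 1) * (r + 1 + (k ^ 2 + r - s)) /
      ((r + 3) * (k ^ 2 + r - s) - (r + 1) * (3 * r + 1)) < r ↔
      3 * r - 1 < k ^ 2 + r - s := by
    rw [div_lt_iff₀ hD]
    constructor <;> intro h <;> nlinarith [sq_nonneg (r + 1)]
  -- δ vs 3r-1 iff k^2(3-r) vs 3r-1
  have hB : (0:ℝ) < k ^ 2 - 2 * r + 1 := by nlinarith [sq_nonneg (r - 1)]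
  have key_lt : k ^ 2 + r - s < 3 * r - 1 ↔ 3 * r - 1 < k ^ 2 * (3 - r) := by
    constructor
    · intro h
      have hs' : k ^ 2 - 2 * r + 1 < s := by linarith
      have h2 : (k ^ 2 - 2 * r + 1) ^ 2 < s ^ 2 := by
        nlinarith [mul_pos (by linarith : (0:ℝ) < s - (k ^ 2 - 2 * r + 1))
          (by linarith : (0:ℝ) < s + (k ^ 2 - 2 * r + 1))]
      nlinarith [h2, hs2, (by linarith : (0:ℝ) < r - 1)]
    · intro h
      have h2 : (k ^ 2 - 2 * r + 1) ^ 2 < s ^ 2 := by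
        nlinarith [mul_pos (by linarith : (0:ℝ) < r - 1)
          (by linarith : (0:ℝ) < k ^ 2 * (3 - r) - (3 * r - 1))]
      have hs' : k ^ 2 - 2 * r + 1 < s := by
        nlinarith [h2, hs0, hB, sq_nonneg (s - (k ^ 2 - 2 * r + 1))]
      linarith
  have key_eq : k ^ 2 + r - s = 3 * r - 1 ↔ 3 * r - 1 = k ^ 2 * (3 - r) := by
    constructor
    · intro h
      have hs' : s = k ^ 2 - 2 * r + 1 := by linarith
      rw [hs'] at hs2
      nlinarith [hs2, (by linarith : (0:ℝ) < r - 1)]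
    · intro h
      have h2 : s ^ 2 = (k ^ 2 - 2 * r + 1) ^ 2 := by nlinarith [hs2]
      have hs' : s = k ^ 2 - 2 * r + 1 := by
        nlinarith [h2, hs0, hB, sq_nonneg (s - (k ^ 2 - 2 * r + 1)), sq_nonneg (s + (k ^ 2 - 2 * r + 1))]
      linarith
  have key_gt : 3 * r - 1 < k ^ 2 + r - s ↔ k ^ 2 * (3 - r) < 3 * r - 1 := by
    rcases lt_trichotomy (k ^ 2 + r - s) (3 * r - 1) with h | h | h
    · constructor
      · intro h'; linarith
      · intro h'; exact absurd (key_lt.mp h) (by linarith)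
    · constructor
      · intro h'; linarith
      · intro h'; have := key_eq.mp h; linarith
    · constructor
      · intro _
        rcases lt_trichotomy (k ^ 2 * (3 - r)) (3 * r - 1) with h2 | h2 | h2
        · exact h2
        · have := key_eq.mpr h2.symm; linarith
        · have := key_lt.mpr h2; linarith
      · intro _; exact h
  constructor
  · intro hr3
    have h3r : (0:ℝ) < 3 - r := by linarith
    refine ⟨?_, ?_, ?_⟩
    · rw [ht_gt, key_lt, gt_iff_lt, div_lt_iff₀ h3r]
    · rw [ht_eq, key_eq, eq_div_iff (ne_of_gt h3r)]
      exact eq_comm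
    · rw [ht_lt, key_gt, lt_div_iff₀ h3r]
  · intro hr3
    rw [ht_lt, key_gt]
    nlinarith

/-- Remark 2, trichotomy comparing `t` with `r`: if `1 < r < 3` then
`t > r ↔ k² > (3r-1)/(3-r)`, `t = r ↔ k² = (3r-1)/(3-r)`,
`t < r ↔ k² < (3r-1)/(3-r)`; and if `r ≥ 3` then `t < r`. -/
theorem stmt9 (k r : ℝ) (hr : 1 < r) (hk : r < k) :
    let δ := k ^ 2 + r - Real.sqrt ((k ^ 2 - 1) * (k ^ 2 - r ^ 2))
    let t := (r - 1) * (r + 1 + δ) / ((r + 3) * δ - (r + 1) * (3 * r + 1))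
    (r < 3 →
      (t > r ↔ k ^ 2 > (3 * r - 1) / (3 - r)) ∧
      (t = r ↔ k ^ 2 = (3 * r - 1) / (3 - r)) ∧
      (t < r ↔ k ^ 2 < (3 * r - 1) / (3 - r))) ∧
    (3 ≤ r → t < r) := by
  intro δ t
  have hk1 : 1 < k := hr.trans hk
  have hprod : 0 ≤ (k ^ 2 - 1) * (k ^ 2 - r ^ 2) := by
    have h1 : (0:ℝ) < k ^ 2 - 1 := by nlinarith
    have h2 : (0:ℝ) < k ^ 2 - r ^ 2 := by nlinarith
    positivity
  exact stmt9_aux k r (Real.sqrt ((k ^ 2 - 1) * (k ^ 2 - r ^ 2))) hr hk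
    (Real.sqrt_nonneg _) (Real.sq_sqrt hprod)
end

section
/- Fix x ∈ (0, 1). For 0 < q < 1, let K(q) := ∫₀¹ dt/√((1−t²)(1−q²t²)). Suppose ε ∈ (0,1) and s : (0,1) → ℝ is a function such that for every q ∈ (0, ε) one has −1 < s(q) ≤ 0 and ∫₀^{s(q)} dt/√((1−t²)(1−(1−q²)t²)) = (2K(q)/π)·log x. Then s(q) tends to (x² − 1)/(x² + 1) as q → 0⁺. -/
open Filter Topology Real Set MeasureTheory intervalIntegral

/-!
The hypothesis reads `F(s(q) | 1 - q²) = c(q) log x` with `F(a | m) = ∫₀^a dt/√((1-t²)(1-mt²))`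
and `c(q) = 2K(q²)/π`. At `m = 1` the integrand is `1/(1-t²)`, so `F(· | 1) = artanh`, and
`tanh (log x) = (x²-1)/(x²+1)`. Comparing integrands, `π/2 ≤ K(m) ≤ π/(2√(1-m))`, so `c(q) ≥ 1`
and `c(q) → 1`; and `artanh a ≤ F(a | m)` for `a ≤ 0`, which gives `artanh (s q) ≤ log x`.
Conversely `F(b | m) → artanh b` as `m → 1⁻` by dominated convergence, so for `b < tanh (log x)`
eventually `F(b | 1 - q²) < c(q) log x = F(s q | 1 - q²)`, and monotonicity in `a` gives `b < s q`.
-/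

/-- The incomplete elliptic integral of the first kind `F(a | m)`, in the parameter `m = k²`. -/
noncomputable def ellipticF (m a : ℝ) : ℝ :=
  ∫ t in (0 : ℝ)..a, 1 / √((1 - t ^ 2) * (1 - m * t ^ 2))

noncomputable def ellipticK (m : ℝ) : ℝ := ellipticF m 1

theorem Real.hasDerivAt_artanh {x : ℝ} (hx : x ∈ Ioo (-1) 1) :
    HasDerivAt artanh (1 / (1 - x ^ 2)) x := by
  obtain ⟨hx₁, hx₂⟩ := hx
  have hlog : HasDerivAt (fun y => (log (1 + y) - log (1 - y)) / 2) (1 / (1 - x ^ 2)) x := by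
    have h₁ := ((hasDerivAt_id' x).const_add 1).log (by linarith)
    have h₂ := ((hasDerivAt_id' x).const_sub 1).log (by linarith)
    refine ((h₁.sub h₂).div_const 2).congr_deriv ?_
    have hp : 1 + x ≠ 0 := by linarith
    have hn : 1 - x ≠ 0 := by linarith
    rw [show 1 - x ^ 2 = (1 + x) * (1 - x) by ring]
    field_simp
    ring
  refine hlog.congr_of_eventuallyEq ?_
  filter_upwards [Ioo_mem_nhds hx₁ hx₂] with y ⟨hy₁, hy₂⟩
  rw [artanh_eq_half_log ⟨hy₁.le, hy₂.le⟩, log_div (by linarith) (by linarith)]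
  ring

theorem Real.tanh_log {x : ℝ} (hx : 0 < x) : tanh (log x) = (x ^ 2 - 1) / (x ^ 2 + 1) := by
  rw [tanh_eq_sinh_div_cosh, sinh_eq, cosh_eq, exp_neg, exp_log hx]
  field_simp

section Integrand

variable {m t : ℝ}

lemma one_sub_sq_pos_of_mem_Ioo (ht : t ∈ Ioo (-1) 1) : 0 < 1 - t ^ 2 := by
  obtain ⟨h₁, h₂⟩ := ht
  nlinarith

lemma one_sub_mul_sq_pos (hm : m ≤ 1) (ht : t ∈ Ioo (-1) 1) : 0 < 1 - m * t ^ 2 := by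
  have := one_sub_sq_pos_of_mem_Ioo ht
  nlinarith [sq_nonneg t]

lemma one_sub_mul_sq_pos_of_sq_le_one (hm : m < 1) (ht : t ^ 2 ≤ 1) : 0 < 1 - m * t ^ 2 := by
  have hmax : max m 0 < 1 := max_lt hm one_pos
  nlinarith [mul_le_mul_of_nonneg_left ht (le_max_right m 0),
    mul_le_mul_of_nonneg_right (le_max_left m 0) (sq_nonneg t)]

lemma continuousOn_ellipticIntegrand (hm : m ≤ 1) :
    ContinuousOn (fun t => 1 / √((1 - t ^ 2) * (1 - m * t ^ 2))) (Ioo (-1) 1) := by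
  refine continuousOn_const.div (by fun_prop) fun t ht => ?_
  exact (sqrt_pos.2 (mul_pos (one_sub_sq_pos_of_mem_Ioo ht) (one_sub_mul_sq_pos hm ht))).ne'

lemma intervalIntegrable_ellipticIntegrand (hm : m ≤ 1) {a b : ℝ} (ha : a ∈ Ioo (-1) 1)
    (hb : b ∈ Ioo (-1) 1) :
    IntervalIntegrable (fun t => 1 / √((1 - t ^ 2) * (1 - m * t ^ 2))) volume a b :=
  ((continuousOn_ellipticIntegrand hm).mono (ordConnected_Ioo.uIcc_subset ha hb)).intervalIntegrable

lemma ellipticIntegrand_le_of_le_one (hm : m ≤ 1) (ht : t ∈ Ioo (-1) 1) :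
    1 / √((1 - t ^ 2) * (1 - m * t ^ 2)) ≤ 1 / √((1 - t ^ 2) * (1 - 1 * t ^ 2)) := by
  have h₁ := one_sub_sq_pos_of_mem_Ioo ht
  refine one_div_le_one_div_of_le (sqrt_pos.2 (by nlinarith)) (sqrt_le_sqrt ?_)
  exact mul_le_mul_of_nonneg_left (by nlinarith [sq_nonneg t]) h₁.le

lemma ellipticIntegrand_eq_mul (ht : t ^ 2 ≤ 1) :
    1 / √((1 - t ^ 2) * (1 - m * t ^ 2)) = 1 / √(1 - t ^ 2) * (1 / √(1 - m * t ^ 2)) := by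
  rw [sqrt_mul (by linarith), one_div_mul_one_div]

end Integrand

theorem ellipticF_one_eq_artanh {a : ℝ} (ha : a ∈ Ioo (-1) 1) : ellipticF 1 a = artanh a := by
  have hsub := ordConnected_Ioo.uIcc_subset (by norm_num : (0 : ℝ) ∈ Ioo (-1) 1) ha
  rw [ellipticF, integral_eq_sub_of_hasDerivAt (f := artanh) (fun t ht => ?_)
    (intervalIntegrable_ellipticIntegrand le_rfl (by norm_num) ha), artanh_zero, sub_zero]
  have h := one_sub_sq_pos_of_mem_Ioo (hsub ht)
  rw [one_mul, sqrt_mul_self h.le]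
  exact hasDerivAt_artanh (hsub ht)

theorem ellipticF_mono {m a b : ℝ} (hm : m ≤ 1) (ha : -1 < a) (hab : a ≤ b) (hb : b < 1) :
    ellipticF m a ≤ ellipticF m b := by
  have h0 : (0 : ℝ) ∈ Ioo (-1) 1 := by norm_num
  rw [← sub_nonneg, ellipticF, ellipticF, integral_interval_sub_left
    (intervalIntegrable_ellipticIntegrand hm h0 ⟨by linarith, hb⟩)
    (intervalIntegrable_ellipticIntegrand hm h0 ⟨ha, by linarith⟩)]
  exact integral_nonneg hab fun t _ => by positivity

theorem artanh_le_ellipticF {m a : ℝ} (hm : m ≤ 1) (ha : -1 < a) (ha₀ : a ≤ 0) :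
    artanh a ≤ ellipticF m a := by
  have hmem : a ∈ Ioo (-1) 1 := ⟨ha, by linarith⟩
  have h0 : (0 : ℝ) ∈ Ioo (-1) 1 := by norm_num
  rw [← ellipticF_one_eq_artanh hmem, ellipticF, ellipticF, integral_symm,
    integral_symm a, neg_le_neg_iff]
  refine integral_mono_on ha₀ (intervalIntegrable_ellipticIntegrand hm hmem h0)
    (intervalIntegrable_ellipticIntegrand le_rfl hmem h0) fun t ht => ?_
  exact ellipticIntegrand_le_of_le_one hm ⟨by linarith [ht.1], by linarith [ht.2]⟩

theorem tendsto_ellipticF_nhdsLE_one {a : ℝ} (ha : a ∈ Ioo (-1) 1) :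
    Tendsto (fun m => ellipticF m a) (𝓝[≤] 1) (𝓝 (artanh a)) := by
  have hsub := ordConnected_Ioo.uIcc_subset (by norm_num : (0 : ℝ) ∈ Ioo (-1) 1) ha
  rw [← ellipticF_one_eq_artanh ha]
  refine tendsto_integral_filter_of_dominated_convergence _ ?_ ?_
    (intervalIntegrable_ellipticIntegrand le_rfl (by norm_num) ha) ?_
  · exact Eventually.of_forall fun m => (by fun_prop : Measurable _).aestronglyMeasurable
  · filter_upwards [self_mem_nhdsWithin] with m hm
    refine Eventually.of_forall fun t ht => ?_
    have ht' := hsub (uIoc_subset_uIcc ht)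
    rw [Real.norm_of_nonneg (by positivity)]
    exact ellipticIntegrand_le_of_le_one hm ht'
  · refine Eventually.of_forall fun t ht => ?_
    have ht' := hsub (uIoc_subset_uIcc ht)
    have h := one_sub_sq_pos_of_mem_Ioo ht'
    refine (ContinuousAt.tendsto ?_).mono_left nhdsWithin_le_nhds
    refine continuousAt_const.div (by fun_prop) ?_
    rw [one_mul]
    exact (sqrt_pos.2 (mul_pos h h)).ne'

theorem intervalIntegrable_one_div_sqrt_one_sub_sq :
    IntervalIntegrable (fun t => 1 / √(1 - t ^ 2)) volume 0 1 := by
  have := Polynomial.Chebyshev.intervalIntegrable_sqrt_one_sub_sq_inv.mono_set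
    (show uIcc (0 : ℝ) 1 ⊆ uIcc (-1) 1 from
      uIcc_subset_uIcc (by norm_num [uIcc]) (by norm_num [uIcc]))
  simpa [sqrt_inv] using this

theorem integral_one_div_sqrt_one_sub_sq : ∫ t in (0 : ℝ)..1, 1 / √(1 - t ^ 2) = π / 2 := by
  rw [integral_eq_sub_of_hasDerivAt_of_le zero_le_one continuous_arcsin.continuousOn
    (fun t ht => hasDerivAt_arcsin (by linarith [ht.1]) ht.2.ne)
    intervalIntegrable_one_div_sqrt_one_sub_sq]
  simp

section CompleteIntegral

variable {m : ℝ}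

lemma intervalIntegrable_ellipticIntegrand_zero_one (hm : m < 1) :
    IntervalIntegrable (fun t => 1 / √((1 - t ^ 2) * (1 - m * t ^ 2))) volume 0 1 := by
  have hg : ContinuousOn (fun t => 1 / √(1 - m * t ^ 2)) (uIcc 0 1) := by
    refine continuousOn_const.div (by fun_prop) fun t ht => ?_
    rw [uIcc_of_le zero_le_one] at ht
    exact (sqrt_pos.2 (one_sub_mul_sq_pos_of_sq_le_one hm (pow_le_one₀ ht.1 ht.2))).ne'
  refine (intervalIntegrable_one_div_sqrt_one_sub_sq.mul_continuousOn hg).congr fun t ht => ?_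
  rw [uIoc_of_le zero_le_one] at ht
  exact (ellipticIntegrand_eq_mul (pow_le_one₀ ht.1.le ht.2)).symm

theorem pi_div_two_le_ellipticK (hm₀ : 0 ≤ m) (hm : m < 1) : π / 2 ≤ ellipticK m := by
  rw [← integral_one_div_sqrt_one_sub_sq, ellipticK, ellipticF]
  refine integral_mono_on zero_le_one intervalIntegrable_one_div_sqrt_one_sub_sq
    (intervalIntegrable_ellipticIntegrand_zero_one hm) fun t ht => ?_
  have ht₁ : t ^ 2 ≤ 1 := pow_le_one₀ ht.1 ht.2
  rw [ellipticIntegrand_eq_mul ht₁]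
  refine le_mul_of_one_le_right (by positivity) (one_le_one_div ?_ ?_)
  · exact sqrt_pos.2 (one_sub_mul_sq_pos_of_sq_le_one hm ht₁)
  · exact sqrt_le_one.2 (by nlinarith [sq_nonneg t])

theorem ellipticK_le (hm₀ : 0 ≤ m) (hm : m < 1) : ellipticK m ≤ π / 2 / √(1 - m) := by
  rw [← integral_one_div_sqrt_one_sub_sq, ← mul_one_div, ← intervalIntegral.integral_mul_const,
    ellipticK, ellipticF]
  refine integral_mono_on zero_le_one (intervalIntegrable_ellipticIntegrand_zero_one hm)
    (intervalIntegrable_one_div_sqrt_one_sub_sq.mul_const _) fun t ht => ?_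
  have ht₁ : t ^ 2 ≤ 1 := pow_le_one₀ ht.1 ht.2
  rw [ellipticIntegrand_eq_mul ht₁]
  refine mul_le_mul_of_nonneg_left (one_div_le_one_div_of_le (sqrt_pos.2 (by linarith)) ?_)
    (by positivity)
  exact sqrt_le_sqrt (by nlinarith)

theorem tendsto_ellipticK_nhdsGE_zero : Tendsto ellipticK (𝓝[≥] 0) (𝓝 (π / 2)) := by
  have hupper : Tendsto (fun m => π / 2 / √(1 - m)) (𝓝[≥] 0) (𝓝 (π / 2)) := by
    have : ContinuousAt (fun m => π / 2 / √(1 - m)) 0 :=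
      continuousAt_const.div (by fun_prop) (by simp)
    simpa using this.tendsto.mono_left nhdsWithin_le_nhds
  refine tendsto_of_tendsto_of_tendsto_of_le_of_le' tendsto_const_nhds hupper ?_ ?_ <;>
    filter_upwards [Ico_mem_nhdsGE zero_lt_one] with m ⟨hm₀, hm⟩
  exacts [pi_div_two_le_ellipticK hm₀ hm, ellipticK_le hm₀ hm]

end CompleteIntegral

theorem tendsto_tanh_of_ellipticF_eq {ι : Type*} {l : Filter ι} {m c s : ι → ℝ} {L : ℝ}
    (hL : L ≤ 0) (hm : Tendsto m l (𝓝[≤] 1)) (hc : Tendsto c l (𝓝 1))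
    (hc₁ : ∀ᶠ i in l, 1 ≤ c i)
    (hs : ∀ᶠ i in l, -1 < s i ∧ s i ≤ 0 ∧ ellipticF (m i) (s i) = c i * L) :
    Tendsto s l (𝓝 (tanh L)) := by
  have hσ : tanh L ∈ Ioo (-1) 1 := ⟨neg_one_lt_tanh L, tanh_lt_one L⟩
  have hm₁ : ∀ᶠ i in l, m i ≤ 1 := hm self_mem_nhdsWithin
  refine tendsto_order.2 ⟨fun b hb => ?_, fun b hb => ?_⟩
  · rcases le_or_gt b (-1) with hb₁ | hb₁
    · filter_upwards [hs] with i ⟨hs₁, _, _⟩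
      linarith
    have hbI : b ∈ Ioo (-1) 1 := ⟨hb₁, hb.trans hσ.2⟩
    have hlt : artanh b < L := by
      simpa only [artanh_tanh] using artanh_lt_artanh hb₁ hσ.2 hb
    have hcL : Tendsto (fun i => c i * L) l (𝓝 L) := by simpa using hc.mul_const L
    filter_upwards [((tendsto_ellipticF_nhdsLE_one hbI).comp hm).eventually_lt hcL hlt, hs, hm₁]
      with i hi ⟨hs₁, _, hsF⟩ hmi
    by_contra! hle
    exact (ellipticF_mono hmi hs₁ hle hbI.2).not_gt (hsF ▸ hi)
  · filter_upwards [hs, hm₁, hc₁] with i ⟨hs₁, hs₀, hsF⟩ hmi hci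
    refine lt_of_le_of_lt ?_ hb
    rw [← artanh_le_artanh_iff ⟨hs₁, by linarith⟩ hσ, artanh_tanh]
    calc artanh (s i) ≤ ellipticF (m i) (s i) := artanh_le_ellipticF hmi hs₁ hs₀
      _ = c i * L := hsF
      _ ≤ L := by nlinarith

theorem stmt12_general (x : ℝ) (hx : 0 < x) (hx1 : x < 1) (ε : ℝ) (hε : 0 < ε)
    (s : ℝ → ℝ)
    (hs : ∀ q ∈ Set.Ioo (0 : ℝ) ε,
      -1 < s q ∧ s q ≤ 0 ∧
      (∫ t in (0 : ℝ)..(s q), 1 / Real.sqrt ((1 - t ^ 2) * (1 - (1 - q ^ 2) * t ^ 2))) =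
        (2 * (∫ t in (0 : ℝ)..1, 1 / Real.sqrt ((1 - t ^ 2) * (1 - q ^ 2 * t ^ 2))) / Real.pi) *
          Real.log x) :
    Tendsto s (𝓝[>] (0 : ℝ)) (𝓝 ((x ^ 2 - 1) / (x ^ 2 + 1))) := by
  have hsq₀ : Tendsto (fun q : ℝ => q ^ 2) (𝓝[>] 0) (𝓝 0) := by
    simpa using ((continuous_pow 2).tendsto (0 : ℝ)).mono_left nhdsWithin_le_nhds
  have hsq : Tendsto (fun q : ℝ => q ^ 2) (𝓝[>] 0) (𝓝[≥] 0) :=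
    tendsto_nhdsWithin_of_tendsto_nhds_of_eventually_within _ hsq₀ (.of_forall sq_nonneg)
  have hm : Tendsto (fun q : ℝ => 1 - q ^ 2) (𝓝[>] 0) (𝓝[≤] 1) :=
    tendsto_nhdsWithin_of_tendsto_nhds_of_eventually_within _ (by simpa using hsq₀.const_sub 1)
      (.of_forall fun q => sub_le_self 1 (sq_nonneg q))
  rw [← tanh_log hx]
  refine tendsto_tanh_of_ellipticF_eq (c := fun q => 2 * ellipticK (q ^ 2) / π)
    (log_nonpos hx.le hx1.le) hm ?_ ?_ ?_
  · simpa [mul_div_cancel₀, pi_ne_zero] using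
      ((tendsto_ellipticK_nhdsGE_zero.comp hsq).const_mul 2).div_const π
  · filter_upwards [Ioo_mem_nhdsGT zero_lt_one] with q ⟨hq₀, hq₁⟩
    rw [le_div_iff₀ pi_pos]
    linarith [pi_div_two_le_ellipticK (sq_nonneg q) (by nlinarith : q ^ 2 < 1)]
  · filter_upwards [Ioo_mem_nhdsGT hε] with q hq
    exact hs q hq

/-- Section 5, Case (iv), limit (5.3): with `K(q) = ∫₀¹ dt/√((1-t²)(1-q²t²))`, if
`s(q) ∈ (-1, 0]` satisfies `∫₀^{s(q)} dt/√((1-t²)(1-(1-q²)t²)) = (2K(q)/π) log x`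
for all `q ∈ (0, ε)`, then `s(q) → (x²-1)/(x²+1)` as `q → 0⁺`. -/
theorem stmt12 (x : ℝ) (hx : 0 < x) (hx1 : x < 1) (ε : ℝ) (hε : 0 < ε) (hε1 : ε < 1)
    (s : ℝ → ℝ)
    (hs : ∀ q ∈ Set.Ioo (0 : ℝ) ε,
      -1 < s q ∧ s q ≤ 0 ∧
      (∫ t in (0 : ℝ)..(s q), 1 / Real.sqrt ((1 - t ^ 2) * (1 - (1 - q ^ 2) * t ^ 2))) =
        (2 * (∫ t in (0 : ℝ)..1, 1 / Real.sqrt ((1 - t ^ 2) * (1 - q ^ 2 * t ^ 2))) / Real.pi) *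
          Real.log x) :
    Tendsto s (𝓝[>] (0 : ℝ)) (𝓝 ((x ^ 2 - 1) / (x ^ 2 + 1))) :=
  stmt12_general x hx hx1 ε hε s hs
end
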